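/- Let 0 < α₂ < α₁ < 1, s₁⁰, s₂⁰ ∈ (0,1), and set s₁ᵏ = s₁⁰/(k+1)^{α₁}, s₂ᵏ = s₂⁰/(k+1)^{α₂}. For every integer k ≥ 1 satisfying k/(k+1)^{α₂} ≥ 2(ln s₂⁰ + (1+α₁−α₂) ln k)/s₂⁰, one has ∑_{l=0}^{k−1} s₁ˡ ∏_{t=l}^{k−1} (1 − s₂^{t+1}) ≤ 5 s₁⁰ / (s₂⁰ k^{α₁−α₂}). -/

import Mathlib

/-!
Put `q = s₂ / (k + 1) ^ α₂`, the smallest of the rates `s₂ / (t + 2) ^ α₂` with `t < k`, so that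
the product starting at `l` is at most `(1 - q) ^ (k - l)`, and split the sum at `l = k / 2`.
Below the split each product is at most `(1 - q) ^ (k - k / 2) ≤ exp (-q k / 2)`, which the
hypothesis on `k` makes at most `1 / (s₂ k ^ (1 + α₁ - α₂))`; as there are at most `k` such terms
with weights `≤ s₁`, they contribute `s₁ / (s₂ k ^ (α₁ - α₂))`. Above the split the weights are at
most `2 s₁ / k ^ α₁` and the powers of `1 - q` add up to at most `1 / q ≤ 2 k ^ α₂ / s₂`.
-/

open Finset Real

lemma rpow_le_two_mul_rpow {x y α : ℝ} (hx : 0 ≤ x) (hxy : x ≤ 2 * y) (hα₀ : 0 ≤ α)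
    (hα₁ : α ≤ 1) : x ^ α ≤ 2 * y ^ α := by
  have hy : 0 ≤ y := by linarith
  calc x ^ α ≤ (2 * y) ^ α := rpow_le_rpow hx hxy hα₀
    _ = 2 ^ α * y ^ α := mul_rpow zero_le_two hy
    _ ≤ 2 * y ^ α := by
        gcongr
        simpa using rpow_le_rpow_of_exponent_le one_le_two hα₁

lemma one_sub_pow_sub_half_le_inv {q C : ℝ} {k : ℕ} (hq₀ : 0 ≤ q) (hq₁ : q ≤ 1) (hC : 0 < C)
    (h : 2 * log C ≤ q * k) : (1 - q) ^ (k - k / 2) ≤ C⁻¹ := by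
  have hhalf : (k : ℝ) ≤ 2 * ((k - k / 2 : ℕ) : ℝ) := by
    exact_mod_cast (by omega : k ≤ 2 * (k - k / 2))
  calc (1 - q) ^ (k - k / 2) ≤ exp (-q) ^ (k - k / 2) :=
        pow_le_pow_left₀ (by linarith) (one_sub_le_exp_neg q) _
    _ = exp (-(q * (k - k / 2 : ℕ))) := by rw [← exp_nat_mul]; ring_nf
    _ ≤ exp (-log C) := exp_le_exp.mpr (by nlinarith)
    _ = C⁻¹ := by rw [exp_neg, exp_log hC]

lemma sum_Ico_pow_sub_le {r : ℝ} (hr₀ : 0 ≤ r) (hr₁ : r < 1) (m k : ℕ) :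
    ∑ l ∈ Ico m k, r ^ (k - l) ≤ (1 - r)⁻¹ := by
  rw [sum_Ico_reflect (r ^ ·) m (Nat.le_succ k), Nat.add_sub_cancel_left]
  calc _ ≤ r ^ 1 / (1 - r) := geom_sum_Ico_le_of_lt_one hr₀ hr₁
    _ ≤ (1 - r)⁻¹ := by
        rw [pow_one, div_eq_mul_inv]
        exact mul_le_of_le_one_left (inv_nonneg.mpr (by linarith)) hr₁.le

lemma one_sub_div_rpow_nonneg {s α x : ℝ} (hs₀ : 0 ≤ s) (hs₁ : s ≤ 1) (hα : 0 ≤ α) (hx : 1 ≤ x) :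
    0 ≤ 1 - s / x ^ α := by
  have : s / x ^ α ≤ s := div_le_self hs₀ (one_le_rpow hx hα)
  linarith

lemma prod_Ico_one_sub_div_rpow_le {s α : ℝ} (hs₀ : 0 ≤ s) (hs₁ : s ≤ 1) (hα : 0 ≤ α) (l k : ℕ) :
    ∏ t ∈ Ico l k, (1 - s / ((t : ℝ) + 2) ^ α) ≤ (1 - s / ((k : ℝ) + 1) ^ α) ^ (k - l) := by
  rw [← Nat.card_Ico l k, ← prod_const]
  refine prod_le_prod (fun t _ => one_sub_div_rpow_nonneg hs₀ hs₁ hα ?_) fun t ht => ?_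
  · linarith [t.cast_nonneg (α := ℝ)]
  have htk : (t : ℝ) + 2 ≤ k + 1 := by
    have := (mem_Ico.mp ht).2
    exact_mod_cast (by omega : t + 2 ≤ k + 1)
  gcongr

lemma sum_range_mul_pow_sub_le {a : ℕ → ℝ} {A ρ : ℝ} {m k : ℕ} (ha₀ : ∀ l, 0 ≤ a l)
    (ha : ∀ l, a l ≤ A) (hρ₀ : 0 ≤ ρ) (hρ₁ : ρ ≤ 1) :
    ∑ l ∈ range m, a l * ρ ^ (k - l) ≤ m * (A * ρ ^ (k - m)) := by
  calc ∑ l ∈ range m, a l * ρ ^ (k - l) ≤ ∑ _l ∈ range m, A * ρ ^ (k - m) :=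
        sum_le_sum fun l hl => mul_le_mul (ha l)
          (pow_le_pow_of_le_one hρ₀ hρ₁ (by have := mem_range.mp hl; omega))
          (pow_nonneg hρ₀ _) ((ha₀ l).trans (ha l))
    _ = m * (A * ρ ^ (k - m)) := by rw [sum_const, card_range, nsmul_eq_mul]

lemma sum_Ico_mul_pow_sub_le {a : ℕ → ℝ} {A ρ : ℝ} {m k : ℕ} (hA : 0 ≤ A)
    (ha : ∀ l ∈ Ico m k, a l ≤ A) (hρ₀ : 0 ≤ ρ) (hρ₁ : ρ < 1) :
    ∑ l ∈ Ico m k, a l * ρ ^ (k - l) ≤ A * (1 - ρ)⁻¹ := by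
  calc ∑ l ∈ Ico m k, a l * ρ ^ (k - l) ≤ ∑ l ∈ Ico m k, A * ρ ^ (k - l) :=
        sum_le_sum fun l hl => mul_le_mul_of_nonneg_right (ha l hl) (pow_nonneg hρ₀ _)
    _ = A * ∑ l ∈ Ico m k, ρ ^ (k - l) := by rw [mul_sum]
    _ ≤ A * (1 - ρ)⁻¹ := mul_le_mul_of_nonneg_left (sum_Ico_pow_sub_le hρ₀ hρ₁ m k) hA

section

variable {α₁ α₂ s₁ s₂ : ℝ} {k : ℕ}

lemma sum_range_half_mul_pow_sub_le (hk : 1 ≤ k) (hα₁ : 0 ≤ α₁)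
    (hs₁ : 0 ≤ s₁) (hs₂ : 0 < s₂) (hq : s₂ / ((k : ℝ) + 1) ^ α₂ ≤ 1)
    (hcond : 2 * (log s₂ + (1 + α₁ - α₂) * log k) / s₂ ≤ (k : ℝ) / ((k : ℝ) + 1) ^ α₂) :
    ∑ l ∈ range (k / 2), s₁ / ((l : ℝ) + 1) ^ α₁ * (1 - s₂ / ((k : ℝ) + 1) ^ α₂) ^ (k - l)
      ≤ s₁ / (s₂ * (k : ℝ) ^ (α₁ - α₂)) := by
  set q := s₂ / ((k : ℝ) + 1) ^ α₂
  have hk₀ : (0 : ℝ) < k := by exact_mod_cast hk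
  have hq₀ : 0 ≤ q := by positivity
  have hlog : 2 * log (s₂ * (k : ℝ) ^ (1 + α₁ - α₂)) ≤ q * k := by
    rw [log_mul hs₂.ne' (rpow_pos_of_pos hk₀ _).ne', log_rpow hk₀]
    calc _ = 2 * (log s₂ + (1 + α₁ - α₂) * log k) / s₂ * s₂ := by field_simp
      _ ≤ (k : ℝ) / ((k : ℝ) + 1) ^ α₂ * s₂ := by gcongr
      _ = q * k := by ring
  calc _ ≤ ((k / 2 : ℕ) : ℝ) * (s₁ * (1 - q) ^ (k - k / 2)) :=
        sum_range_mul_pow_sub_le (fun l => by positivity)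
          (fun l => div_le_self hs₁ (one_le_rpow (by linarith [l.cast_nonneg (α := ℝ)]) hα₁))
          (by linarith) (by linarith)
    _ ≤ k * (s₁ * (s₂ * (k : ℝ) ^ (1 + α₁ - α₂))⁻¹) := by
        gcongr
        · exact_mod_cast Nat.div_le_self k 2
        · exact one_sub_pow_sub_half_le_inv hq₀ hq (by positivity) hlog
    _ = s₁ / (s₂ * (k : ℝ) ^ (α₁ - α₂)) := by
        rw [add_sub_assoc, rpow_add hk₀, rpow_one]
        field_simp

lemma sum_Ico_half_mul_pow_sub_le (hk : 1 ≤ k) (hα₁₀ : 0 ≤ α₁)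
    (hα₁ : α₁ ≤ 1) (hα₂₀ : 0 ≤ α₂) (hα₂ : α₂ ≤ 1) (hs₁ : 0 ≤ s₁) (hs₂ : 0 < s₂)
    (hq : s₂ / ((k : ℝ) + 1) ^ α₂ < 1) :
    ∑ l ∈ Ico (k / 2) k, s₁ / ((l : ℝ) + 1) ^ α₁ * (1 - s₂ / ((k : ℝ) + 1) ^ α₂) ^ (k - l)
      ≤ 4 * s₁ / (s₂ * (k : ℝ) ^ (α₁ - α₂)) := by
  set q := s₂ / ((k : ℝ) + 1) ^ α₂
  have hk₁ : (1 : ℝ) ≤ k := by exact_mod_cast hk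
  have hk₀ : (0 : ℝ) < k := by linarith
  have hq₀ : 0 < q := by positivity
  have hhalf : (k : ℝ) ≤ 2 * (((k / 2 : ℕ) : ℝ) + 1) := by
    exact_mod_cast (by omega : k ≤ 2 * (k / 2 + 1))
  calc _ ≤ s₁ / (((k / 2 : ℕ) : ℝ) + 1) ^ α₁ * (1 - (1 - q))⁻¹ :=
        sum_Ico_mul_pow_sub_le (by positivity)
          (fun l hl => by gcongr; exact_mod_cast (mem_Ico.mp hl).1) (by linarith) (by linarith)
    _ = s₁ / (((k / 2 : ℕ) : ℝ) + 1) ^ α₁ * (((k : ℝ) + 1) ^ α₂ / s₂) := by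
        rw [sub_sub_cancel, inv_div]
    _ ≤ s₁ / ((k : ℝ) ^ α₁ / 2) * (2 * (k : ℝ) ^ α₂ / s₂) := by
        gcongr
        · linarith [rpow_le_two_mul_rpow (by positivity) hhalf hα₁₀ hα₁]
        · exact rpow_le_two_mul_rpow (by positivity) (by linarith) hα₂₀ hα₂
    _ = 4 * s₁ / (s₂ * (k : ℝ) ^ (α₁ - α₂)) := by
        rw [rpow_sub hk₀]
        field_simp
        ring

end

theorem bias_sum_bound (α₁ α₂ s₁ s₂ : ℝ) (hα₂ : 0 < α₂) (hα₁₂ : α₂ < α₁) (hα₁ : α₁ < 1)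
    (hs₁ : s₁ ∈ Set.Ioo (0:ℝ) 1) (hs₂ : s₂ ∈ Set.Ioo (0:ℝ) 1) (k : ℕ) (hk : 1 ≤ k)
    (hcond : 2 * (Real.log s₂ + (1 + α₁ - α₂) * Real.log k) / s₂
      ≤ (k : ℝ) / ((k : ℝ) + 1) ^ α₂) :
    ∑ l ∈ Finset.range k, (s₁ / ((l : ℝ) + 1) ^ α₁) *
        ∏ t ∈ Finset.Ico l k, (1 - s₂ / ((t : ℝ) + 2) ^ α₂)
      ≤ 5 * s₁ / (s₂ * (k : ℝ) ^ (α₁ - α₂)) := by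
  obtain ⟨hs₁₀, -⟩ := hs₁
  obtain ⟨hs₂₀, hs₂₁⟩ := hs₂
  have hq : s₂ / ((k : ℝ) + 1) ^ α₂ < 1 :=
    (div_le_self hs₂₀.le (one_le_rpow (by linarith [k.cast_nonneg (α := ℝ)]) hα₂.le)).trans_lt hs₂₁
  set ρ := 1 - s₂ / ((k : ℝ) + 1) ^ α₂
  calc _ ≤ ∑ l ∈ range k, s₁ / ((l : ℝ) + 1) ^ α₁ * ρ ^ (k - l) :=
        sum_le_sum fun l _ => mul_le_mul_of_nonneg_left
          (prod_Ico_one_sub_div_rpow_le hs₂₀.le hs₂₁.le hα₂.le l k) (by positivity)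
    _ = ∑ l ∈ range (k / 2), s₁ / ((l : ℝ) + 1) ^ α₁ * ρ ^ (k - l)
        + ∑ l ∈ Ico (k / 2) k, s₁ / ((l : ℝ) + 1) ^ α₁ * ρ ^ (k - l) :=
        (sum_range_add_sum_Ico _ (Nat.div_le_self k 2)).symm
    _ ≤ s₁ / (s₂ * (k : ℝ) ^ (α₁ - α₂)) + 4 * s₁ / (s₂ * (k : ℝ) ^ (α₁ - α₂)) :=
        add_le_add
          (sum_range_half_mul_pow_sub_le hk (by linarith) hs₁₀.le hs₂₀ hq.le hcond)
          (sum_Ico_half_mul_pow_sub_le hk (by linarith) hα₁.le hα₂.le (by linarith) hs₁₀.le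
            hs₂₀ hq)
    _ = 5 * s₁ / (s₂ * (k : ℝ) ^ (α₁ - α₂)) := by ring
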